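/- arXiv:1703.01417 — 4 statements merged into one kernel-verified Lean document; each statement's English description precedes it below -/
import Mathlib

section
/- A linear dynamical system (A,B) of size (1,2,0) (A a 2×2 complex matrix, B a 2×1 complex matrix, C the empty 0×2 matrix) is indecomposable if and only if it is equivalent to one of the following canonical forms: (J₂(λ), (0,1)ᵀ) for some λ ∈ ℂ, (J₂(λ), (1,0)ᵀ) for some λ ∈ ℂ, or (diag(λ,μ), (1,1)ᵀ) for some λ, μ ∈ ℂ with λ ≠ μ. -/
open Matrix

/-- Two linear dynamical systems `(A,B,C)` and `(A',B',C')` of size `(m,n,l)` are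
equivalent if there are invertible matrices `X, Y, Z` with
`A' = Y A Y⁻¹`, `B' = Y B X⁻¹`, `C' = Z C Y⁻¹`. -/
def SysEquiv {m n l : ℕ}
    (A : Matrix (Fin n) (Fin n) ℂ) (B : Matrix (Fin n) (Fin m) ℂ) (C : Matrix (Fin l) (Fin n) ℂ)
    (A' : Matrix (Fin n) (Fin n) ℂ) (B' : Matrix (Fin n) (Fin m) ℂ) (C' : Matrix (Fin l) (Fin n) ℂ) :
    Prop :=
  ∃ (X : Matrix (Fin m) (Fin m) ℂ) (Y : Matrix (Fin n) (Fin n) ℂ) (Z : Matrix (Fin l) (Fin l) ℂ),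
    IsUnit X ∧ IsUnit Y ∧ IsUnit Z ∧
      A' = Y * A * Y⁻¹ ∧ B' = Y * B * X⁻¹ ∧ C' = Z * C * Y⁻¹

/-- A system of size `(m,n,l)` is decomposable if it is equivalent to a direct sum
(block-diagonal) of two systems, each of nonzero total size. -/
def Decomposable {m n l : ℕ}
    (A : Matrix (Fin n) (Fin n) ℂ) (B : Matrix (Fin n) (Fin m) ℂ)
    (C : Matrix (Fin l) (Fin n) ℂ) : Prop :=
  ∃ (m₁ m₂ n₁ n₂ l₁ l₂ : ℕ) (hm : m₁ + m₂ = m) (hn : n₁ + n₂ = n) (hl : l₁ + l₂ = l)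
    (A₁ : Matrix (Fin n₁) (Fin n₁) ℂ) (B₁ : Matrix (Fin n₁) (Fin m₁) ℂ)
    (C₁ : Matrix (Fin l₁) (Fin n₁) ℂ)
    (A₂ : Matrix (Fin n₂) (Fin n₂) ℂ) (B₂ : Matrix (Fin n₂) (Fin m₂) ℂ)
    (C₂ : Matrix (Fin l₂) (Fin n₂) ℂ),
    0 < m₁ + n₁ + l₁ ∧ 0 < m₂ + n₂ + l₂ ∧
      SysEquiv A B C
        (Matrix.reindex (finSumFinEquiv.trans (finCongr hn)) (finSumFinEquiv.trans (finCongr hn))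
          (Matrix.fromBlocks A₁ 0 0 A₂))
        (Matrix.reindex (finSumFinEquiv.trans (finCongr hn)) (finSumFinEquiv.trans (finCongr hm))
          (Matrix.fromBlocks B₁ 0 0 B₂))
        (Matrix.reindex (finSumFinEquiv.trans (finCongr hl)) (finSumFinEquiv.trans (finCongr hn))
          (Matrix.fromBlocks C₁ 0 0 C₂))

/-- A system is indecomposable if it is not decomposable. -/
def Indecomposable {m n l : ℕ}
    (A : Matrix (Fin n) (Fin n) ℂ) (B : Matrix (Fin n) (Fin m) ℂ)
    (C : Matrix (Fin l) (Fin n) ℂ) : Prop :=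
  ¬ Decomposable A B C

/-! ### Auxiliary lemmas -/

lemma entry_eq {n m : ℕ} {M N : Matrix (Fin n) (Fin m) ℂ} (h : M = N) (i : Fin n) (j : Fin m) :
    M i j = N i j := by rw [h]

lemma sysEquiv_trans {m n l : ℕ}
    {A A' A'' : Matrix (Fin n) (Fin n) ℂ} {B B' B'' : Matrix (Fin n) (Fin m) ℂ}
    {C C' C'' : Matrix (Fin l) (Fin n) ℂ}
    (h1 : SysEquiv A B C A' B' C') (h2 : SysEquiv A' B' C' A'' B'' C'') :
    SysEquiv A B C A'' B'' C'' := by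
  obtain ⟨X1, Y1, Z1, hX1, hY1, hZ1, hA1, hB1, hC1⟩ := h1
  obtain ⟨X2, Y2, Z2, hX2, hY2, hZ2, hA2, hB2, hC2⟩ := h2
  refine ⟨X2 * X1, Y2 * Y1, Z2 * Z1, hX2.mul hX1, hY2.mul hY1, hZ2.mul hZ1, ?_, ?_, ?_⟩
  · rw [hA2, hA1, Matrix.mul_inv_rev]; simp only [Matrix.mul_assoc]
  · rw [hB2, hB1, Matrix.mul_inv_rev]; simp only [Matrix.mul_assoc]
  · rw [hC2, hC1, Matrix.mul_inv_rev]; simp only [Matrix.mul_assoc]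

lemma sysEquiv_symm {m n l : ℕ}
    {A A' : Matrix (Fin n) (Fin n) ℂ} {B B' : Matrix (Fin n) (Fin m) ℂ}
    {C C' : Matrix (Fin l) (Fin n) ℂ}
    (h1 : SysEquiv A B C A' B' C') : SysEquiv A' B' C' A B C := by
  obtain ⟨X, Y, Z, hX, hY, hZ, hA, hB, hC⟩ := h1
  have hXd := (Matrix.isUnit_iff_isUnit_det X).mp hX
  have hYd := (Matrix.isUnit_iff_isUnit_det Y).mp hY
  have hZd := (Matrix.isUnit_iff_isUnit_det Z).mp hZ
  refine ⟨X⁻¹, Y⁻¹, Z⁻¹, Matrix.isUnit_nonsing_inv_iff.mpr hX,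
    Matrix.isUnit_nonsing_inv_iff.mpr hY, Matrix.isUnit_nonsing_inv_iff.mpr hZ, ?_, ?_, ?_⟩
  · rw [hA, Matrix.nonsing_inv_nonsing_inv Y hYd]; symm
    calc Y⁻¹ * (Y * A * Y⁻¹) * Y = (Y⁻¹ * Y) * (A * (Y⁻¹ * Y)) := by
          simp only [Matrix.mul_assoc]
      _ = A := by rw [Matrix.nonsing_inv_mul Y hYd]; simp
  · rw [hB, Matrix.nonsing_inv_nonsing_inv X hXd]; symm
    calc Y⁻¹ * (Y * B * X⁻¹) * X = (Y⁻¹ * Y) * (B * (X⁻¹ * X)) := by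
          simp only [Matrix.mul_assoc]
      _ = B := by rw [Matrix.nonsing_inv_mul Y hYd, Matrix.nonsing_inv_mul X hXd]; simp
  · rw [hC, Matrix.nonsing_inv_nonsing_inv Y hYd]; symm
    calc Z⁻¹ * (Z * C * Y⁻¹) * Y = (Z⁻¹ * Z) * (C * (Y⁻¹ * Y)) := by
          simp only [Matrix.mul_assoc]
      _ = C := by rw [Matrix.nonsing_inv_mul Z hZd, Matrix.nonsing_inv_mul Y hYd]; simp

lemma decomp_transport {m n l : ℕ}
    {A A' : Matrix (Fin n) (Fin n) ℂ} {B B' : Matrix (Fin n) (Fin m) ℂ}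
    {C C' : Matrix (Fin l) (Fin n) ℂ}
    (he : SysEquiv A B C A' B' C') (hd : Decomposable A' B' C') : Decomposable A B C := by
  obtain ⟨m₁, m₂, n₁, n₂, l₁, l₂, hm, hn, hl, A₁, B₁, C₁, A₂, B₂, C₂, h₁, h₂, hq⟩ := hd
  exact ⟨m₁, m₂, n₁, n₂, l₁, l₂, hm, hn, hl, A₁, B₁, C₁, A₂, B₂, C₂, h₁, h₂,
    sysEquiv_trans he hq⟩

lemma one_by_one_inv (x : ℂ) (hx : x ≠ 0) : (!![x])⁻¹ = !![x⁻¹] := by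
  apply Matrix.inv_eq_right_inv
  ext i j
  fin_cases i; fin_cases j
  simp [Matrix.mul_apply, Fin.sum_univ_one, mul_inv_cancel₀ hx]

lemma one_by_one_isUnit (x : ℂ) (hx : x ≠ 0) : IsUnit (!![x]) := by
  rw [Matrix.isUnit_iff_isUnit_det, Matrix.det_fin_one]
  simpa using hx

lemma sysEquiv_of_P (A A' : Matrix (Fin 2) (Fin 2) ℂ) (B B' : Matrix (Fin 2) (Fin 1) ℂ)
    (P : Matrix (Fin 2) (Fin 2) ℂ) (x : ℂ) (hP : P.det ≠ 0) (hx : x ≠ 0)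
    (hA : A * P = P * A') (hB : B = P * B' * !![x]) :
    SysEquiv A B (0 : Matrix (Fin 0) (Fin 2) ℂ) A' B' 0 := by
  have hPd : IsUnit P.det := isUnit_iff_ne_zero.mpr hP
  have hPinv : P⁻¹ * P = 1 := Matrix.nonsing_inv_mul P hPd
  refine ⟨!![x], P⁻¹, 1, one_by_one_isUnit x hx, Matrix.isUnit_nonsing_inv_iff.mpr
    ((Matrix.isUnit_iff_isUnit_det P).mpr hPd), isUnit_one, ?_, ?_, ?_⟩
  · rw [Matrix.nonsing_inv_nonsing_inv P hPd, Matrix.mul_assoc, hA, ← Matrix.mul_assoc,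
      hPinv, Matrix.one_mul]
  · rw [one_by_one_inv x hx, hB]
    have h1 : !![x] * !![x⁻¹] = 1 := by
      ext i j; fin_cases i; fin_cases j
      simp [Matrix.mul_apply, Fin.sum_univ_one, mul_inv_cancel₀ hx]
    calc B' = B' * (!![x] * !![x⁻¹]) := by rw [h1]; simp
      _ = P⁻¹ * (P * B' * !![x]) * !![x⁻¹] := by
          rw [← Matrix.mul_assoc, ← Matrix.mul_assoc, ← Matrix.mul_assoc, hPinv]; simp
  · ext i j; exact i.elim0

lemma decomposable_of_equiv_diag (A : Matrix (Fin 2) (Fin 2) ℂ) (B : Matrix (Fin 2) (Fin 1) ℂ)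
    (a e : ℂ) (h : SysEquiv A B (0 : Matrix (Fin 0) (Fin 2) ℂ) !![a, 0; 0, e] !![1; 0] 0) :
    Decomposable A B (0 : Matrix (Fin 0) (Fin 2) ℂ) := by
  refine ⟨1, 0, 1, 1, 0, 0, rfl, rfl, rfl, !![a], !![(1:ℂ)], 0, !![e], 0, 0,
    by norm_num, by norm_num, ?_⟩
  have e1 : (Matrix.reindex (finSumFinEquiv.trans (finCongr (rfl : 1+1=2)))
      (finSumFinEquiv.trans (finCongr (rfl : 1+1=2)))
      (Matrix.fromBlocks !![a] 0 0 !![e])) = !![a, 0; 0, e] := by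
    ext i j; fin_cases i <;> fin_cases j <;> rfl
  have e2 : (Matrix.reindex (finSumFinEquiv.trans (finCongr (rfl : 1+1=2)))
      (finSumFinEquiv.trans (finCongr (rfl : 1+0=1)))
      (Matrix.fromBlocks !![(1:ℂ)] 0 0 (0 : Matrix (Fin 1) (Fin 0) ℂ))) = !![1; 0] := by
    ext i j; fin_cases i <;> fin_cases j <;> rfl
  rw [e1, e2]
  have e3 : (Matrix.reindex (finSumFinEquiv.trans (finCongr (rfl : 0+0=0)))
      (finSumFinEquiv.trans (finCongr (rfl : 1+1=2)))
      (Matrix.fromBlocks (0 : Matrix (Fin 0) (Fin 1) ℂ) 0 0 (0 : Matrix (Fin 0) (Fin 1) ℂ)))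
      = (0 : Matrix (Fin 0) (Fin 2) ℂ) := by
    ext i j; exact i.elim0
  rw [e3]
  exact h

lemma decomposable_of_B_zero (A : Matrix (Fin 2) (Fin 2) ℂ) :
    Decomposable A (0 : Matrix (Fin 2) (Fin 1) ℂ) (0 : Matrix (Fin 0) (Fin 2) ℂ) := by
  refine ⟨1, 0, 0, 2, 0, 0, rfl, rfl, rfl, (0 : Matrix (Fin 0) (Fin 0) ℂ),
    (0 : Matrix (Fin 0) (Fin 1) ℂ), 0, A, (0 : Matrix (Fin 2) (Fin 0) ℂ), 0,
    by norm_num, by norm_num, ?_⟩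
  have e1 : (Matrix.reindex (finSumFinEquiv.trans (finCongr (rfl : 0+2=2)))
      (finSumFinEquiv.trans (finCongr (rfl : 0+2=2)))
      (Matrix.fromBlocks (0 : Matrix (Fin 0) (Fin 0) ℂ) 0 0 A)) = A := by
    ext i j; fin_cases i <;> fin_cases j <;> rfl
  have e2 : (Matrix.reindex (finSumFinEquiv.trans (finCongr (rfl : 0+2=2)))
      (finSumFinEquiv.trans (finCongr (rfl : 1+0=1)))
      (Matrix.fromBlocks (0 : Matrix (Fin 0) (Fin 1) ℂ) 0 0 (0 : Matrix (Fin 2) (Fin 0) ℂ)))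
      = (0 : Matrix (Fin 2) (Fin 1) ℂ) := by
    ext i j; fin_cases i <;> fin_cases j <;> rfl
  have e3 : (Matrix.reindex (finSumFinEquiv.trans (finCongr (rfl : 0+0=0)))
      (finSumFinEquiv.trans (finCongr (rfl : 0+2=2)))
      (Matrix.fromBlocks (0 : Matrix (Fin 0) (Fin 0) ℂ) 0 0 (0 : Matrix (Fin 0) (Fin 2) ℂ)))
      = (0 : Matrix (Fin 0) (Fin 2) ℂ) := by
    ext i j; exact i.elim0
  rw [e1, e2, e3]
  exact ⟨1, 1, 1, isUnit_one, isUnit_one, isUnit_one, by simp, by simp, by simp⟩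

lemma decomp_cases (A : Matrix (Fin 2) (Fin 2) ℂ) (B : Matrix (Fin 2) (Fin 1) ℂ)
    (hd : Decomposable A B (0 : Matrix (Fin 0) (Fin 2) ℂ)) :
    B = 0 ∨ (∃ a e β, SysEquiv A B (0 : Matrix (Fin 0) (Fin 2) ℂ) !![a, 0; 0, e] !![β; 0] 0) ∨
      (∃ a e β, SysEquiv A B (0 : Matrix (Fin 0) (Fin 2) ℂ) !![a, 0; 0, e] !![0; β] 0) := by
  obtain ⟨m₁, m₂, n₁, n₂, l₁, l₂, hm, hn, hl, A₁, B₁, C₁, A₂, B₂, C₂, h₁, h₂, hequiv⟩ := hd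
  obtain rfl : l₁ = 0 := by omega
  obtain rfl : l₂ = 0 := by omega
  have hn2 : n₁ = 0 ∨ n₁ = 1 ∨ n₁ = 2 := by omega
  rcases hn2 with rfl | rfl | rfl
  · obtain rfl : m₁ = 1 := by omega
    obtain rfl : m₂ = 0 := by omega
    obtain rfl : n₂ = 2 := by omega
    left
    obtain ⟨X, Y, Z, hX, hY, hZ, hA, hB, hC⟩ := hequiv
    have hBz : (Matrix.reindex (finSumFinEquiv.trans (finCongr hn))
        (finSumFinEquiv.trans (finCongr hm)) (Matrix.fromBlocks B₁ 0 0 B₂)) = 0 := by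
      ext i j
      rw [Matrix.reindex_apply, Matrix.submatrix_apply]
      rcases hsi : (finSumFinEquiv.trans (finCongr hn)).symm i with x | x
      · exact x.elim0
      rcases hsj : (finSumFinEquiv.trans (finCongr hm)).symm j with y | y
      · rfl
      · exact y.elim0
    rw [hBz] at hB
    have hXd := (Matrix.isUnit_iff_isUnit_det X).mp hX
    have hYd := (Matrix.isUnit_iff_isUnit_det Y).mp hY
    have hYB : Y * B = 0 := by
      have h1 : Y * B * (X⁻¹ * X) = 0 := by
        rw [← Matrix.mul_assoc, ← hB, Matrix.zero_mul]
      rwa [Matrix.nonsing_inv_mul X hXd, Matrix.mul_one] at h1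
    calc B = Y⁻¹ * (Y * B) := by
            rw [← Matrix.mul_assoc, Matrix.nonsing_inv_mul Y hYd, Matrix.one_mul]
      _ = 0 := by rw [hYB]; simp
  · obtain rfl : n₂ = 1 := by omega
    have hm2 : m₁ = 0 ∨ m₁ = 1 := by omega
    rcases hm2 with rfl | rfl
    · obtain rfl : m₂ = 1 := by omega
      right; right
      refine ⟨A₁ 0 0, A₂ 0 0, B₂ 0 0, ?_⟩
      have e1 : (Matrix.reindex (finSumFinEquiv.trans (finCongr hn))
          (finSumFinEquiv.trans (finCongr hn)) (Matrix.fromBlocks A₁ 0 0 A₂))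
          = !![A₁ 0 0, 0; 0, A₂ 0 0] := by
        ext i j; fin_cases i <;> fin_cases j <;> rfl
      have e2 : (Matrix.reindex (finSumFinEquiv.trans (finCongr hn))
          (finSumFinEquiv.trans (finCongr hm)) (Matrix.fromBlocks B₁ 0 0 B₂))
          = !![0; B₂ 0 0] := by
        ext i j; fin_cases i <;> fin_cases j <;> rfl
      rw [e1, e2] at hequiv
      obtain ⟨X, Y, Z, hX, hY, hZ, hA, hB, hC⟩ := hequiv
      exact ⟨X, Y, Z, hX, hY, hZ, hA, hB, by ext i j; exact i.elim0⟩
    · obtain rfl : m₂ = 0 := by omega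
      right; left
      refine ⟨A₁ 0 0, A₂ 0 0, B₁ 0 0, ?_⟩
      have e1 : (Matrix.reindex (finSumFinEquiv.trans (finCongr hn))
          (finSumFinEquiv.trans (finCongr hn)) (Matrix.fromBlocks A₁ 0 0 A₂))
          = !![A₁ 0 0, 0; 0, A₂ 0 0] := by
        ext i j; fin_cases i <;> fin_cases j <;> rfl
      have e2 : (Matrix.reindex (finSumFinEquiv.trans (finCongr hn))
          (finSumFinEquiv.trans (finCongr hm)) (Matrix.fromBlocks B₁ 0 0 B₂))
          = !![B₁ 0 0; 0] := by
        ext i j; fin_cases i <;> fin_cases j <;> rfl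
      rw [e1, e2] at hequiv
      obtain ⟨X, Y, Z, hX, hY, hZ, hA, hB, hC⟩ := hequiv
      exact ⟨X, Y, Z, hX, hY, hZ, hA, hB, by ext i j; exact i.elim0⟩
  · obtain rfl : n₂ = 0 := by omega
    obtain rfl : m₂ = 1 := by omega
    obtain rfl : m₁ = 0 := by omega
    left
    obtain ⟨X, Y, Z, hX, hY, hZ, hA, hB, hC⟩ := hequiv
    have hBz : (Matrix.reindex (finSumFinEquiv.trans (finCongr hn))
        (finSumFinEquiv.trans (finCongr hm)) (Matrix.fromBlocks B₁ 0 0 B₂)) = 0 := by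
      ext i j
      rw [Matrix.reindex_apply, Matrix.submatrix_apply]
      rcases hsi : (finSumFinEquiv.trans (finCongr hn)).symm i with x | x
      · rcases hsj : (finSumFinEquiv.trans (finCongr hm)).symm j with y | y
        · exact y.elim0
        · rfl
      · exact x.elim0
    rw [hBz] at hB
    have hXd := (Matrix.isUnit_iff_isUnit_det X).mp hX
    have hYd := (Matrix.isUnit_iff_isUnit_det Y).mp hY
    have hYB : Y * B = 0 := by
      have h1 : Y * B * (X⁻¹ * X) = 0 := by
        rw [← Matrix.mul_assoc, ← hB, Matrix.zero_mul]
      rwa [Matrix.nonsing_inv_mul X hXd, Matrix.mul_one] at h1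
    calc B = Y⁻¹ * (Y * B) := by
            rw [← Matrix.mul_assoc, Matrix.nonsing_inv_mul Y hYd, Matrix.one_mul]
      _ = 0 := by rw [hYB]; simp

lemma not_J2_diag (l a e : ℂ) (Y : Matrix (Fin 2) (Fin 2) ℂ) (hY : IsUnit Y)
    (h : !![a, 0; 0, e] = Y * !![l, 1; 0, l] * Y⁻¹) : False := by
  have hYd := (Matrix.isUnit_iff_isUnit_det Y).mp hY
  have h' : !![a, 0; 0, e] * Y = Y * !![l, 1; 0, l] := by
    rw [h, Matrix.mul_assoc, Matrix.nonsing_inv_mul Y hYd, Matrix.mul_one]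
  have q00 := entry_eq h' 0 0
  have q01 := entry_eq h' 0 1
  have q10 := entry_eq h' 1 0
  have q11 := entry_eq h' 1 1
  simp [Matrix.mul_apply, Fin.sum_univ_two] at q00 q01 q10 q11
  have hy00 : Y 0 0 = 0 := by
    by_contra h0
    have hal : a = l := mul_right_cancel₀ h0 (by linear_combination q00)
    apply h0
    linear_combination -q01 + Y 0 1 * hal
  have hy10 : Y 1 0 = 0 := by
    by_contra h0
    have hel : e = l := mul_right_cancel₀ h0 (by linear_combination q10)
    apply h0
    linear_combination -q11 + Y 1 1 * hel
  have : Y.det = 0 := by rw [Matrix.det_fin_two, hy00, hy10]; ring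
  exact isUnit_iff_ne_zero.mp hYd this

lemma not_diag_distinct_row1 (l m a e β : ℂ) (hlm : l ≠ m)
    (Y : Matrix (Fin 2) (Fin 2) ℂ) (X : Matrix (Fin 1) (Fin 1) ℂ)
    (hY : IsUnit Y) (hX : IsUnit X)
    (hA : !![a, 0; 0, e] = Y * !![l, 0; 0, m] * Y⁻¹)
    (hB : !![β; 0] = Y * !![(1:ℂ); 1] * X⁻¹) : False := by
  have hYd := (Matrix.isUnit_iff_isUnit_det Y).mp hY
  have hXd := (Matrix.isUnit_iff_isUnit_det X).mp hX
  have hA' : !![a, 0; 0, e] * Y = Y * !![l, 0; 0, m] := by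
    rw [hA, Matrix.mul_assoc, Matrix.nonsing_inv_mul Y hYd, Matrix.mul_one]
  have hB' : !![β; 0] * X = Y * !![(1:ℂ); 1] := by
    rw [hB, Matrix.mul_assoc, Matrix.nonsing_inv_mul X hXd, Matrix.mul_one]
  have q10 := entry_eq hA' 1 0
  have q11 := entry_eq hA' 1 1
  have r1 := entry_eq hB' 1 0
  simp [Matrix.mul_apply, Fin.sum_univ_two, Fin.sum_univ_one] at q10 q11 r1
  by_cases h0 : Y 1 0 = 0
  · have h1 : Y 1 1 = 0 := by linear_combination -r1 - h0
    have : Y.det = 0 := by rw [Matrix.det_fin_two, h0, h1]; ring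
    exact isUnit_iff_ne_zero.mp hYd this
  · have hel : e = l := mul_right_cancel₀ h0 (by linear_combination q10)
    have h1 : Y 1 1 ≠ 0 := by
      intro hz
      apply h0
      linear_combination -r1 - hz
    have hem : e = m := mul_right_cancel₀ h1 (by linear_combination q11)
    exact hlm (hel ▸ hem ▸ rfl)

lemma not_diag_distinct_row0 (l m a e β : ℂ) (hlm : l ≠ m)
    (Y : Matrix (Fin 2) (Fin 2) ℂ) (X : Matrix (Fin 1) (Fin 1) ℂ)
    (hY : IsUnit Y) (hX : IsUnit X)
    (hA : !![a, 0; 0, e] = Y * !![l, 0; 0, m] * Y⁻¹)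
    (hB : !![0; β] = Y * !![(1:ℂ); 1] * X⁻¹) : False := by
  have hYd := (Matrix.isUnit_iff_isUnit_det Y).mp hY
  have hXd := (Matrix.isUnit_iff_isUnit_det X).mp hX
  have hA' : !![a, 0; 0, e] * Y = Y * !![l, 0; 0, m] := by
    rw [hA, Matrix.mul_assoc, Matrix.nonsing_inv_mul Y hYd, Matrix.mul_one]
  have hB' : !![0; β] * X = Y * !![(1:ℂ); 1] := by
    rw [hB, Matrix.mul_assoc, Matrix.nonsing_inv_mul X hXd, Matrix.mul_one]
  have q00 := entry_eq hA' 0 0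
  have q01 := entry_eq hA' 0 1
  have r0 := entry_eq hB' 0 0
  simp [Matrix.mul_apply, Fin.sum_univ_two, Fin.sum_univ_one] at q00 q01 r0
  by_cases h0 : Y 0 0 = 0
  · have h1 : Y 0 1 = 0 := by linear_combination -r0 - h0
    have : Y.det = 0 := by rw [Matrix.det_fin_two, h0, h1]; ring
    exact isUnit_iff_ne_zero.mp hYd this
  · have hel : a = l := mul_right_cancel₀ h0 (by linear_combination q00)
    have h1 : Y 0 1 ≠ 0 := by
      intro hz
      apply h0
      linear_combination -r0 - hz
    have hem : a = m := mul_right_cancel₀ h1 (by linear_combination q01)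
    exact hlm (hel ▸ hem ▸ rfl)

lemma indecomp_canonical1 (l : ℂ) :
    Indecomposable !![l, 1; 0, l] !![(0:ℂ); 1] (0 : Matrix (Fin 0) (Fin 2) ℂ) := by
  intro hd
  rcases decomp_cases _ _ hd with hB | ⟨a, e, β, hS⟩ | ⟨a, e, β, hS⟩
  · have := entry_eq hB (1 : Fin 2) (0 : Fin 1)
    simp at this
  · obtain ⟨X, Y, Z, hX, hY, hZ, hA, _, _⟩ := hS
    exact not_J2_diag l a e Y hY hA
  · obtain ⟨X, Y, Z, hX, hY, hZ, hA, _, _⟩ := hS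
    exact not_J2_diag l a e Y hY hA

lemma indecomp_canonical2 (l : ℂ) :
    Indecomposable !![l, 1; 0, l] !![(1:ℂ); 0] (0 : Matrix (Fin 0) (Fin 2) ℂ) := by
  intro hd
  rcases decomp_cases _ _ hd with hB | ⟨a, e, β, hS⟩ | ⟨a, e, β, hS⟩
  · have := entry_eq hB (0 : Fin 2) (0 : Fin 1)
    simp at this
  · obtain ⟨X, Y, Z, hX, hY, hZ, hA, _, _⟩ := hS
    exact not_J2_diag l a e Y hY hA
  · obtain ⟨X, Y, Z, hX, hY, hZ, hA, _, _⟩ := hS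
    exact not_J2_diag l a e Y hY hA

lemma indecomp_canonical3 (l m : ℂ) (hlm : l ≠ m) :
    Indecomposable !![l, 0; 0, m] !![(1:ℂ); 1] (0 : Matrix (Fin 0) (Fin 2) ℂ) := by
  intro hd
  rcases decomp_cases _ _ hd with hB | ⟨a, e, β, hS⟩ | ⟨a, e, β, hS⟩
  · have := entry_eq hB (0 : Fin 2) (0 : Fin 1)
    simp at this
  · obtain ⟨X, Y, Z, hX, hY, hZ, hA, hBe, _⟩ := hS
    exact not_diag_distinct_row1 l m a e β hlm Y X hY hX hA hBe
  · obtain ⟨X, Y, Z, hX, hY, hZ, hA, hBe, _⟩ := hS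
    exact not_diag_distinct_row0 l m a e β hlm Y X hY hX hA hBe

lemma cyclic_distinct (A : Matrix (Fin 2) (Fin 2) ℂ) (B : Matrix (Fin 2) (Fin 1) ℂ) (l m : ℂ)
    (hsum : l + m = A 0 0 + A 1 1)
    (hprod : l * m = A 0 0 * A 1 1 - A 0 1 * A 1 0)
    (hlm : l ≠ m)
    (hD : B 0 0 * (A 1 0 * B 0 0 + A 1 1 * B 1 0)
        - B 1 0 * (A 0 0 * B 0 0 + A 0 1 * B 1 0) ≠ 0) :
    SysEquiv A B (0 : Matrix (Fin 0) (Fin 2) ℂ) !![l, 0; 0, m] !![(1:ℂ); 1] 0 := by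
  have hlm' : l - m ≠ 0 := sub_ne_zero.mpr hlm
  apply sysEquiv_of_P A _ B _
    !![A 0 0 * B 0 0 + A 0 1 * B 1 0 - m * B 0 0, -(A 0 0 * B 0 0 + A 0 1 * B 1 0 - l * B 0 0);
       A 1 0 * B 0 0 + A 1 1 * B 1 0 - m * B 1 0, -(A 1 0 * B 0 0 + A 1 1 * B 1 0 - l * B 1 0)]
    ((l - m)⁻¹) ?_ (inv_ne_zero hlm') ?_ ?_
  · have hdet : Matrix.det !![A 0 0 * B 0 0 + A 0 1 * B 1 0 - m * B 0 0,
        -(A 0 0 * B 0 0 + A 0 1 * B 1 0 - l * B 0 0);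
        A 1 0 * B 0 0 + A 1 1 * B 1 0 - m * B 1 0,
        -(A 1 0 * B 0 0 + A 1 1 * B 1 0 - l * B 1 0)]
      = (m - l) * (B 0 0 * (A 1 0 * B 0 0 + A 1 1 * B 1 0)
        - B 1 0 * (A 0 0 * B 0 0 + A 0 1 * B 1 0)) := by
      rw [Matrix.det_fin_two]
      simp
      ring
    rw [hdet]
    exact mul_ne_zero (sub_ne_zero.mpr (Ne.symm hlm)) hD
  · ext i j
    fin_cases i <;> fin_cases j <;> simp [Matrix.mul_apply, Fin.sum_univ_two]
    · linear_combination (-(A 0 0 * B 0 0 + A 0 1 * B 1 0)) * hsum + B 0 0 * hprod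
    · linear_combination (A 0 0 * B 0 0 + A 0 1 * B 1 0) * hsum - B 0 0 * hprod
    · linear_combination (-(A 1 0 * B 0 0 + A 1 1 * B 1 0)) * hsum + B 1 0 * hprod
    · linear_combination (A 1 0 * B 0 0 + A 1 1 * B 1 0) * hsum - B 1 0 * hprod
  · ext i j
    fin_cases i <;> fin_cases j <;> simp [Matrix.mul_apply, Fin.sum_univ_two] <;>
      field_simp <;> ring

lemma cyclic_equal (A : Matrix (Fin 2) (Fin 2) ℂ) (B : Matrix (Fin 2) (Fin 1) ℂ) (l : ℂ)
    (hsum : l + l = A 0 0 + A 1 1)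
    (hprod : l * l = A 0 0 * A 1 1 - A 0 1 * A 1 0)
    (hD : B 0 0 * (A 1 0 * B 0 0 + A 1 1 * B 1 0)
        - B 1 0 * (A 0 0 * B 0 0 + A 0 1 * B 1 0) ≠ 0) :
    SysEquiv A B (0 : Matrix (Fin 0) (Fin 2) ℂ) !![l, 1; 0, l] !![(0:ℂ); 1] 0 := by
  apply sysEquiv_of_P A _ B _
    !![A 0 0 * B 0 0 + A 0 1 * B 1 0 - l * B 0 0, B 0 0;
       A 1 0 * B 0 0 + A 1 1 * B 1 0 - l * B 1 0, B 1 0] 1 ?_ one_ne_zero ?_ ?_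
  · have hdet : Matrix.det !![A 0 0 * B 0 0 + A 0 1 * B 1 0 - l * B 0 0, B 0 0;
        A 1 0 * B 0 0 + A 1 1 * B 1 0 - l * B 1 0, B 1 0]
      = -(B 0 0 * (A 1 0 * B 0 0 + A 1 1 * B 1 0)
        - B 1 0 * (A 0 0 * B 0 0 + A 0 1 * B 1 0)) := by
      rw [Matrix.det_fin_two]; simp; ring
    rw [hdet]
    exact neg_ne_zero.mpr hD
  · ext i j
    fin_cases i <;> fin_cases j <;> simp [Matrix.mul_apply, Fin.sum_univ_two]
    · linear_combination (-(A 0 0 * B 0 0 + A 0 1 * B 1 0)) * hsum + B 0 0 * hprod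
    · ring
    · linear_combination (-(A 1 0 * B 0 0 + A 1 1 * B 1 0)) * hsum + B 1 0 * hprod
    · ring
  · ext i j
    fin_cases i <;> fin_cases j <;> simp [Matrix.mul_apply, Fin.sum_univ_two]

lemma jordan_from_Q (A : Matrix (Fin 2) (Fin 2) ℂ) (B : Matrix (Fin 2) (Fin 1) ℂ)
    (Q : Matrix (Fin 2) (Fin 2) ℂ) (l c : ℂ) (hc : c ≠ 0)
    (hQd : Q.det ≠ 0) (hQ : A * Q = Q * !![l, c; 0, l])
    (hb : B = Q * !![(1:ℂ); 0] * !![(1:ℂ)]) :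
    SysEquiv A B (0 : Matrix (Fin 0) (Fin 2) ℂ) !![l, 1; 0, l] !![(1:ℂ); 0] 0 := by
  apply sysEquiv_of_P A _ B _ (Q * !![c, 0; 0, 1]) c⁻¹ ?_ (inv_ne_zero hc) ?_ ?_
  · rw [Matrix.det_mul]
    apply mul_ne_zero hQd
    rw [Matrix.det_fin_two]
    simpa using hc
  · rw [← Matrix.mul_assoc, hQ, Matrix.mul_assoc, Matrix.mul_assoc]
    congr 1
    ext i j
    fin_cases i <;> fin_cases j <;> simp [Matrix.mul_apply, Fin.sum_univ_two] <;> ring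
  · rw [hb]
    simp only [Matrix.mul_assoc]
    congr 1
    ext i j
    fin_cases i <;> fin_cases j <;> simp [Matrix.mul_apply, Fin.sum_univ_two,
      Fin.sum_univ_one] <;> field_simp

lemma diag_from_Q (A : Matrix (Fin 2) (Fin 2) ℂ) (B : Matrix (Fin 2) (Fin 1) ℂ)
    (Q : Matrix (Fin 2) (Fin 2) ℂ) (l c e : ℂ) (hel : e ≠ l)
    (hQd : Q.det ≠ 0) (hQ : A * Q = Q * !![l, c; 0, e])
    (hb : B = Q * !![(1:ℂ); 0] * !![(1:ℂ)]) :
    SysEquiv A B (0 : Matrix (Fin 0) (Fin 2) ℂ) !![l, 0; 0, e] !![(1:ℂ); 0] 0 := by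
  have hel' : e - l ≠ 0 := sub_ne_zero.mpr hel
  apply sysEquiv_of_P A _ B _ (Q * !![1, c * (e - l)⁻¹; 0, 1]) 1 ?_ one_ne_zero ?_ ?_
  · rw [Matrix.det_mul]
    apply mul_ne_zero hQd
    rw [Matrix.det_fin_two]
    norm_num
  · rw [← Matrix.mul_assoc, hQ, Matrix.mul_assoc, Matrix.mul_assoc]
    congr 1
    ext i j
    fin_cases i <;> fin_cases j <;> simp [Matrix.mul_apply, Fin.sum_univ_two]
    field_simp
    ring
  · rw [hb]
    simp only [Matrix.mul_assoc]
    congr 1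
    ext i j
    fin_cases i <;> fin_cases j <;>
      simp [Matrix.mul_apply, Fin.sum_univ_two, Fin.sum_univ_one]

lemma dependent_resolve (A : Matrix (Fin 2) (Fin 2) ℂ) (B : Matrix (Fin 2) (Fin 1) ℂ)
    (Q : Matrix (Fin 2) (Fin 2) ℂ) (l c e : ℂ)
    (hQd : Q.det ≠ 0) (hQ : A * Q = Q * !![l, c; 0, e])
    (hb : B = Q * !![(1:ℂ); 0] * !![(1:ℂ)])
    (hind : Indecomposable A B (0 : Matrix (Fin 0) (Fin 2) ℂ)) :
    ∃ l', SysEquiv A B (0 : Matrix (Fin 0) (Fin 2) ℂ) !![l', 1; 0, l'] !![(1:ℂ); 0] 0 := by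
  by_cases hel : e = l
  · subst hel
    by_cases hc : c = 0
    · subst hc
      exfalso
      apply hind
      exact decomposable_of_equiv_diag A B e e
        (sysEquiv_of_P A _ B _ Q 1 hQd one_ne_zero hQ hb)
    · exact ⟨e, jordan_from_Q A B Q e c hc hQd hQ hb⟩
  · exfalso
    apply hind
    exact decomposable_of_equiv_diag A B l e (diag_from_Q A B Q l c e hel hQd hQ hb)

/-- indecomposable size (1,2,0) systems are exactly those equivalent to
(J₂(λ),(0,1)ᵀ), (J₂(λ),(1,0)ᵀ), or (diag(λ,μ),(1,1)ᵀ) with λ ≠ μ. -/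
theorem size_1_2_0_indecomposable_iff_canonical
    (A : Matrix (Fin 2) (Fin 2) ℂ) (B : Matrix (Fin 2) (Fin 1) ℂ) :
    Indecomposable A B (0 : Matrix (Fin 0) (Fin 2) ℂ) ↔
      (∃ l : ℂ, SysEquiv A B (0 : Matrix (Fin 0) (Fin 2) ℂ) !![l, 1; 0, l] !![0; 1] 0) ∨
      (∃ l : ℂ, SysEquiv A B (0 : Matrix (Fin 0) (Fin 2) ℂ) !![l, 1; 0, l] !![1; 0] 0) ∨
      (∃ l m : ℂ, l ≠ m ∧ SysEquiv A B (0 : Matrix (Fin 0) (Fin 2) ℂ) !![l, 0; 0, m] !![1; 1] 0) := by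
  constructor
  · intro hind
    by_cases hB0 : B = 0
    · exact absurd (by rw [hB0]; exact decomposable_of_B_zero A) hind
    have hBent : B 0 0 ≠ 0 ∨ B 1 0 ≠ 0 := by
      by_contra hc
      push_neg at hc
      apply hB0
      ext i j
      fin_cases i <;> fin_cases j
      · exact hc.1
      · exact hc.2
    by_cases hD : B 0 0 * (A 1 0 * B 0 0 + A 1 1 * B 1 0)
        - B 1 0 * (A 0 0 * B 0 0 + A 0 1 * B 1 0) = 0
    · -- dependent case: B is an eigenvector of A
      obtain ⟨l, hl0, hl1⟩ : ∃ l : ℂ, A 0 0 * B 0 0 + A 0 1 * B 1 0 = l * B 0 0 ∧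
          A 1 0 * B 0 0 + A 1 1 * B 1 0 = l * B 1 0 := by
        rcases hBent with h | h
        · refine ⟨(A 0 0 * B 0 0 + A 0 1 * B 1 0) / B 0 0, by field_simp, ?_⟩
          field_simp
          linear_combination hD
        · refine ⟨(A 1 0 * B 0 0 + A 1 1 * B 1 0) / B 1 0, ?_, by field_simp⟩
          field_simp
          linear_combination -hD
      rcases hBent with h | h
      · have hQd : (!![B 0 0, 0; B 1 0, 1]).det ≠ 0 := by
          rw [Matrix.det_fin_two]; simpa using h
        have hQ : A * !![B 0 0, 0; B 1 0, 1] = !![B 0 0, 0; B 1 0, 1] *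
            !![l, A 0 1 / B 0 0; 0, A 1 1 - (A 0 1 / B 0 0) * B 1 0] := by
          ext i j
          fin_cases i <;> fin_cases j <;> simp [Matrix.mul_apply, Fin.sum_univ_two]
          · linear_combination hl0
          · field_simp
          · linear_combination hl1
          · ring
        have hb : B = !![B 0 0, 0; B 1 0, 1] * !![(1:ℂ); 0] * !![(1:ℂ)] := by
          ext i j
          fin_cases i <;> fin_cases j <;>
            simp [Matrix.mul_apply, Fin.sum_univ_two, Fin.sum_univ_one]
        obtain ⟨l', hS⟩ := dependent_resolve A B _ l _ _ hQd hQ hb hind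
        exact Or.inr (Or.inl ⟨l', hS⟩)
      · have hQd : (!![B 0 0, 1; B 1 0, 0]).det ≠ 0 := by
          rw [Matrix.det_fin_two]; simpa using h
        have hQ : A * !![B 0 0, 1; B 1 0, 0] = !![B 0 0, 1; B 1 0, 0] *
            !![l, A 1 0 / B 1 0; 0, A 0 0 - (A 1 0 / B 1 0) * B 0 0] := by
          ext i j
          fin_cases i <;> fin_cases j <;> simp [Matrix.mul_apply, Fin.sum_univ_two]
          · linear_combination hl0
          · ring
          · linear_combination hl1
          · field_simp
        have hb : B = !![B 0 0, 1; B 1 0, 0] * !![(1:ℂ); 0] * !![(1:ℂ)] := by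
          ext i j
          fin_cases i <;> fin_cases j <;>
            simp [Matrix.mul_apply, Fin.sum_univ_two, Fin.sum_univ_one]
        obtain ⟨l', hS⟩ := dependent_resolve A B _ l _ _ hQd hQ hb hind
        exact Or.inr (Or.inl ⟨l', hS⟩)
    · -- cyclic case
      obtain ⟨s, hs⟩ := IsAlgClosed.exists_pow_nat_eq
        ((A 0 0 + A 1 1)^2 - 4*(A 0 0 * A 1 1 - A 0 1 * A 1 0)) (n := 2) (by norm_num)
      set t := A 0 0 + A 1 1 with ht
      set d := A 0 0 * A 1 1 - A 0 1 * A 1 0 with hd2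
      have hsum : (t + s)/2 + (t - s)/2 = A 0 0 + A 1 1 := by rw [← ht]; ring
      have hprod : (t + s)/2 * ((t - s)/2) = A 0 0 * A 1 1 - A 0 1 * A 1 0 := by
        rw [← hd2]
        linear_combination (-1/4 : ℂ) * hs
      by_cases hlm : (t + s)/2 = (t - s)/2
      · left
        refine ⟨(t + s)/2, cyclic_equal A B _ ?_ ?_ hD⟩
        · rw [← hsum]; rw [← hlm]
        · rw [← hprod]; rw [← hlm]
      · right; right
        exact ⟨(t + s)/2, (t - s)/2, hlm, cyclic_distinct A B _ _ hsum hprod hlm hD⟩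
  · intro h
    rcases h with ⟨l, h⟩ | ⟨l, h⟩ | ⟨l, m, hlm, h⟩
    · intro hd
      exact indecomp_canonical1 l (decomp_transport (sysEquiv_symm h) hd)
    · intro hd
      exact indecomp_canonical2 l (decomp_transport (sysEquiv_symm h) hd)
    · intro hd
      exact indecomp_canonical3 l m hlm (decomp_transport (sysEquiv_symm h) hd)
end

section
/- Let λ ∈ ℂ, let B = (b₂, b₁)ᵀ be a 2×1 complex matrix with bottom entry b₁ ≠ 0, and let C = (c₁, c₂) be a 1×2 complex matrix with c₁ ≠ 0. Then the size-(1,2,1) system (J₂(λ), B, C) is equivalent to the canonical form (J₂(λ), (0,1)ᵀ, (1,μ)) for some μ ∈ ℂ. -/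
open Matrix

/-! The unitriangular `Y = !![1, -b₂/b₁; 0, 1]` commutes with `J₂(λ)`, so conjugating by it leaves
the state matrix unchanged while clearing the top entry of `B`; the scalars `X = b₁` and `Z = c₁⁻¹`
then normalise `B` to `(0, 1)ᵀ` and `C` to `(1, μ)` with `μ = b₂/b₁ + c₂/c₁`. -/

theorem SysEquiv.of_commute {m n l : ℕ} {A : Matrix (Fin n) (Fin n) ℂ}
    {B : Matrix (Fin n) (Fin m) ℂ} {C : Matrix (Fin l) (Fin n) ℂ} {X : Matrix (Fin m) (Fin m) ℂ}
    {Y : Matrix (Fin n) (Fin n) ℂ} {Z : Matrix (Fin l) (Fin l) ℂ}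
    (hX : IsUnit X) (hY : IsUnit Y) (hZ : IsUnit Z) (hYA : Commute Y A) :
    SysEquiv A B C A (Y * B * X⁻¹) (Z * C * Y⁻¹) :=
  ⟨X, Y, Z, hX, hY, hZ, by
    rw [hYA.eq, mul_nonsing_inv_cancel_right _ _ ((isUnit_iff_isUnit_det Y).mp hY)], rfl, rfl⟩

theorem Matrix.isUnit_fin_one_of_ne_zero {K : Type*} [Field K] {a : K} (ha : a ≠ 0) :
    IsUnit !![a] := by
  simpa [isUnit_iff_isUnit_det, det_fin_one] using ha

theorem Matrix.isUnit_unitriangular_fin_two {R : Type*} [CommRing R] (t : R) :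
    IsUnit !![1, t; 0, 1] := by
  simp [isUnit_iff_isUnit_det, det_fin_two]

theorem Matrix.inv_unitriangular_fin_two {R : Type*} [CommRing R] (t : R) :
    (!![1, t; 0, 1])⁻¹ = !![1, -t; 0, 1] :=
  inv_eq_right_inv (by simp [one_fin_two])

theorem Matrix.commute_upperToeplitz_fin_two {R : Type*} [CommRing R] (a b c d : R) :
    Commute !![a, b; 0, a] !![c, d; 0, c] := by
  rw [Commute, SemiconjBy, mul_fin_two, mul_fin_two]
  ring_nf

/-- a size (1,2,1) system (J₂(λ), (b₂,b₁)ᵀ, (c₁,c₂)) with b₁ ≠ 0 and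
c₁ ≠ 0 is equivalent to (J₂(λ), (0,1)ᵀ, (1,μ)) for some μ. -/
theorem size_1_2_1_jordan_canonical (l b₁ b₂ c₁ c₂ : ℂ) (hb : b₁ ≠ 0) (hc : c₁ ≠ 0) :
    ∃ m : ℂ, SysEquiv !![l, 1; 0, l] !![b₂; b₁] !![c₁, c₂]
      !![l, 1; 0, l] !![0; 1] !![1, m] := by
  have h := SysEquiv.of_commute (B := !![b₂; b₁]) (C := !![c₁, c₂])
    (isUnit_fin_one_of_ne_zero hb) (isUnit_unitriangular_fin_two (-b₂ / b₁))
    (isUnit_fin_one_of_ne_zero (inv_ne_zero hc)) (commute_upperToeplitz_fin_two 1 _ l 1)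
  refine ⟨b₂ / b₁ + c₂ / c₁, ?_⟩
  convert h using 1
  · ext i j
    fin_cases i <;> fin_cases j <;> simp [mul_apply, hb]
  · rw [inv_unitriangular_fin_two]
    ext i j
    fin_cases j <;> simp [mul_apply, hc]
    field_simp
end

section
/- A linear dynamical system (A,B) of size (2,2,0) (A a 2×2, B a 2×2 complex matrix, C the empty 0×2 matrix) is indecomposable if and only if it is equivalent to the canonical form (J₂(λ), I₂) for some λ ∈ ℂ, where I₂ is the 2×2 identity matrix. -/
open Matrix

/-- Matrix `P` with columns `v`, `w`. -/
private def colPair (v w : Fin 2 → ℂ) : Matrix (Fin 2) (Fin 2) ℂ := !![v 0, w 0; v 1, w 1]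

private lemma colPair_mulVec (v w u : Fin 2 → ℂ) :
    colPair v w *ᵥ u = u 0 • v + u 1 • w := by
  ext i
  fin_cases i <;> simp [colPair, mulVec, dotProduct, Fin.sum_univ_two] <;> ring

private lemma nonzero_fun (v : Fin 2 → ℂ) (h : v ≠ 0) : v 0 ≠ 0 ∨ v 1 ≠ 0 := by
  by_contra hc
  push_neg at hc
  exact h (by ext i; fin_cases i <;> simp [hc.1, hc.2])

private lemma isUnit_colPair_jordan {A : Matrix (Fin 2) (Fin 2) ℂ} {l : ℂ} {v v' : Fin 2 → ℂ}
    (hv' : v' ≠ 0) (h1 : A *ᵥ v' = l • v') (h2 : A *ᵥ v = l • v + v') :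
    IsUnit (colPair v' v) := by
  rw [Matrix.isUnit_iff_isUnit_det, isUnit_iff_ne_zero]
  intro hdet
  obtain ⟨u, hu, hPu⟩ := Matrix.exists_mulVec_eq_zero_iff.mpr hdet
  rw [colPair_mulVec] at hPu
  have happ : A *ᵥ (u 0 • v' + u 1 • v) = 0 := by rw [hPu, mulVec_zero]
  rw [mulVec_add, mulVec_smul, mulVec_smul, h1, h2] at happ
  have key : u 1 • v' = 0 := by
    have : u 0 • l • v' + u 1 • (l • v + v') - l • (u 0 • v' + u 1 • v) = u 1 • v' := by
      module
    rw [← this, happ, hPu]; simp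
  have hu1 : u 1 = 0 := by
    rcases smul_eq_zero.mp key with h | h
    · exact h
    · exact absurd h hv'
  have hu0 : u 0 = 0 := by
    rw [hu1, zero_smul, add_zero] at hPu
    rcases smul_eq_zero.mp hPu with h | h
    · exact h
    · exact absurd h hv'
  exact hu (by ext i; fin_cases i <;> simpa)

private lemma isUnit_colPair_diag {A : Matrix (Fin 2) (Fin 2) ℂ} {l m : ℂ} {v w : Fin 2 → ℂ}
    (hv : v ≠ 0) (hw : w ≠ 0) (hlm : l ≠ m)
    (h1 : A *ᵥ v = l • v) (h2 : A *ᵥ w = m • w) :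
    IsUnit (colPair v w) := by
  rw [Matrix.isUnit_iff_isUnit_det, isUnit_iff_ne_zero]
  intro hdet
  obtain ⟨u, hu, hPu⟩ := Matrix.exists_mulVec_eq_zero_iff.mpr hdet
  rw [colPair_mulVec] at hPu
  have happ : A *ᵥ (u 0 • v + u 1 • w) = 0 := by rw [hPu, mulVec_zero]
  rw [mulVec_add, mulVec_smul, mulVec_smul, h1, h2] at happ
  have key : ((l - m) * u 0) • v = 0 := by
    have : u 0 • l • v + u 1 • m • w - m • (u 0 • v + u 1 • w) = ((l - m) * u 0) • v := by
      module
    rw [← this, happ, hPu]; simp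
  have hu0 : u 0 = 0 := by
    rcases smul_eq_zero.mp key with h | h
    · rcases mul_eq_zero.mp h with h' | h'
      · exact absurd (sub_eq_zero.mp h') hlm
      · exact h'
    · exact absurd h hv
  have hu1 : u 1 = 0 := by
    rw [hu0, zero_smul, zero_add] at hPu
    rcases smul_eq_zero.mp hPu with h | h
    · exact h
    · exact absurd h hw
  exact hu (by ext i; fin_cases i <;> simpa)

/-- Factored Cayley–Hamilton for 2×2 matrices. -/
private lemma ch_factored (A : Matrix (Fin 2) (Fin 2) ℂ) (l m : ℂ)
    (h1 : l + m = A 0 0 + A 1 1) (h2 : l * m = A 0 0 * A 1 1 - A 0 1 * A 1 0) :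
    (A - l • 1) * (A - m • 1) = 0 := by
  ext i j
  fin_cases i <;> fin_cases j <;>
    simp [Matrix.mul_apply, Fin.sum_univ_two, Matrix.one_apply, Matrix.smul_apply] <;>
    first
      | linear_combination (- A 0 0) * h1 + h2
      | linear_combination (A 0 0) * h1 - h2
      | linear_combination (- A 0 1) * h1
      | linear_combination (A 0 1) * h1
      | linear_combination (- A 1 0) * h1
      | linear_combination (A 1 0) * h1
      | linear_combination (- A 1 1) * h1 + h2
      | linear_combination (A 1 1) * h1 - h2

private lemma exists_mulVec_ne_zero {M : Matrix (Fin 2) (Fin 2) ℂ} (h : M ≠ 0) :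
    ∃ v : Fin 2 → ℂ, M *ᵥ v ≠ 0 := by
  by_contra hc
  push_neg at hc
  apply h
  ext i j
  have := congrFun (hc (Pi.single j 1)) i
  rw [Matrix.mulVec_single] at this
  simpa using this

private lemma mul_colPair_jordan {A : Matrix (Fin 2) (Fin 2) ℂ} {l : ℂ} {v v' : Fin 2 → ℂ}
    (h1 : A *ᵥ v' = l • v') (h2 : A *ᵥ v = l • v + v') :
    A * colPair v' v = colPair v' v * !![l, 1; 0, l] := by
  have e1 : ∀ i, A i 0 * v' 0 + A i 1 * v' 1 = l * v' i := by
    intro i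
    have := congrFun h1 i
    simpa [mulVec, dotProduct, Fin.sum_univ_two] using this
  have e2 : ∀ i, A i 0 * v 0 + A i 1 * v 1 = l * v i + v' i := by
    intro i
    have := congrFun h2 i
    simpa [mulVec, dotProduct, Fin.sum_univ_two] using this
  ext i j
  fin_cases i <;> fin_cases j <;>
    simp [colPair, Matrix.mul_apply, Fin.sum_univ_two] <;>
    first
      | linear_combination e1 0
      | linear_combination e1 1
      | linear_combination e2 0
      | linear_combination e2 1

private lemma mul_colPair_diag {A : Matrix (Fin 2) (Fin 2) ℂ} {l m : ℂ} {v w : Fin 2 → ℂ}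
    (h1 : A *ᵥ v = l • v) (h2 : A *ᵥ w = m • w) :
    A * colPair v w = colPair v w * !![l, 0; 0, m] := by
  have e1 : ∀ i, A i 0 * v 0 + A i 1 * v 1 = l * v i := by
    intro i
    have := congrFun h1 i
    simpa [mulVec, dotProduct, Fin.sum_univ_two] using this
  have e2 : ∀ i, A i 0 * w 0 + A i 1 * w 1 = m * w i := by
    intro i
    have := congrFun h2 i
    simpa [mulVec, dotProduct, Fin.sum_univ_two] using this
  ext i j
  fin_cases i <;> fin_cases j <;>
    simp [colPair, Matrix.mul_apply, Fin.sum_univ_two] <;>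
    first
      | linear_combination e1 0
      | linear_combination e1 1
      | linear_combination e2 0
      | linear_combination e2 1

private lemma canonical_of {A B P : Matrix (Fin 2) (Fin 2) ℂ} {l : ℂ}
    (hB : IsUnit B) (hP : IsUnit P) (h : A * P = P * !![l, 1; 0, l]) :
    SysEquiv A B (0 : Matrix (Fin 0) (Fin 2) ℂ) !![l, 1; 0, l] (1 : Matrix (Fin 2) (Fin 2) ℂ) 0 := by
  have hPd : IsUnit P.det := (Matrix.isUnit_iff_isUnit_det P).mp hP
  have hPinv : IsUnit P⁻¹ := Matrix.isUnit_nonsing_inv_iff.mpr hP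
  refine ⟨P⁻¹ * B, P⁻¹, 1, hPinv.mul hB, hPinv, isUnit_one, ?_, ?_, ?_⟩
  · rw [Matrix.nonsing_inv_nonsing_inv P hPd, Matrix.mul_assoc, h, ← Matrix.mul_assoc,
      Matrix.nonsing_inv_mul P hPd, Matrix.one_mul]
  · rw [Matrix.mul_nonsing_inv _ ((Matrix.isUnit_iff_isUnit_det _).mp (hPinv.mul hB))]
  · ext i j; exact i.elim0

private lemma decomp_diag {A B P : Matrix (Fin 2) (Fin 2) ℂ} {d₁ d₂ : ℂ}
    (hB : IsUnit B) (hP : IsUnit P) (h : A * P = P * !![d₁, 0; 0, d₂]) :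
    Decomposable A B (0 : Matrix (Fin 0) (Fin 2) ℂ) := by
  have hPd : IsUnit P.det := (Matrix.isUnit_iff_isUnit_det P).mp hP
  have hPinv : IsUnit P⁻¹ := Matrix.isUnit_nonsing_inv_iff.mpr hP
  refine ⟨1, 1, 1, 1, 0, 0, rfl, rfl, rfl, !![d₁], !![1], 0, !![d₂], !![1], 0,
    by norm_num, by norm_num, P⁻¹ * B, P⁻¹, 1, hPinv.mul hB, hPinv, isUnit_one, ?_, ?_, ?_⟩
  · have : (Matrix.reindex (finSumFinEquiv.trans (finCongr (rfl : 1 + 1 = 2)))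
        (finSumFinEquiv.trans (finCongr (rfl : 1 + 1 = 2)))
        (Matrix.fromBlocks !![d₁] 0 0 !![d₂])) = !![d₁, 0; 0, d₂] := by
      ext i j
      fin_cases i <;> fin_cases j <;>
        simp [Matrix.reindex_apply, Matrix.submatrix_apply, finCongr, finSumFinEquiv] <;> rfl
    rw [this, Matrix.nonsing_inv_nonsing_inv P hPd, Matrix.mul_assoc, h, ← Matrix.mul_assoc,
      Matrix.nonsing_inv_mul P hPd, Matrix.one_mul]
  · have : (Matrix.reindex (finSumFinEquiv.trans (finCongr (rfl : 1 + 1 = 2)))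
        (finSumFinEquiv.trans (finCongr (rfl : 1 + 1 = 2)))
        (Matrix.fromBlocks !![(1:ℂ)] 0 0 !![1])) = (1 : Matrix (Fin 2) (Fin 2) ℂ) := by
      ext i j
      fin_cases i <;> fin_cases j <;>
        simp [Matrix.reindex_apply, Matrix.submatrix_apply, finCongr, finSumFinEquiv,
          Matrix.one_apply] <;> rfl
    rw [this, Matrix.mul_nonsing_inv _ ((Matrix.isUnit_iff_isUnit_det _).mp (hPinv.mul hB))]
  · ext i j; exact i.elim0

private lemma decomp_singular {A B : Matrix (Fin 2) (Fin 2) ℂ}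
    (hB : ¬ IsUnit B) : Decomposable A B (0 : Matrix (Fin 0) (Fin 2) ℂ) := by
  have hdet : B.det = 0 := by
    by_contra h
    exact hB ((Matrix.isUnit_iff_isUnit_det B).mpr (isUnit_iff_ne_zero.mpr h))
  obtain ⟨v, hv, hBv⟩ := Matrix.exists_mulVec_eq_zero_iff.mpr hdet
  set U : Matrix (Fin 2) (Fin 2) ℂ := !![-(starRingEnd ℂ) (v 1), v 0; (starRingEnd ℂ) (v 0), v 1]
    with hU
  have hUdet : U.det ≠ 0 := by
    rw [hU, Matrix.det_fin_two_of]
    intro h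
    apply hv
    have h2 : (Complex.normSq (v 1) : ℂ) + (Complex.normSq (v 0) : ℂ) = 0 := by
      rw [← Complex.mul_conj, ← Complex.mul_conj]
      linear_combination -h
    have h0 : Complex.normSq (v 1) + Complex.normSq (v 0) = 0 := by
      exact_mod_cast h2
    have h00 : Complex.normSq (v 0) = 0 ∧ Complex.normSq (v 1) = 0 := by
      constructor <;> nlinarith [Complex.normSq_nonneg (v 0), Complex.normSq_nonneg (v 1)]
    ext i
    fin_cases i <;>
      simp [Complex.normSq_eq_zero.mp h00.1, Complex.normSq_eq_zero.mp h00.2]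
  have hUunit : IsUnit U := (Matrix.isUnit_iff_isUnit_det U).mpr (isUnit_iff_ne_zero.mpr hUdet)
  have hBU1 : ∀ i, (B * U) i 1 = 0 := by
    intro i
    have := congrFun hBv i
    simp [Matrix.mul_apply, Fin.sum_univ_two, hU, mulVec, dotProduct] at this ⊢
    linear_combination this
  refine ⟨1, 1, 2, 0, 0, 0, rfl, rfl, rfl, A, Matrix.of (fun i _ => (B * U) i 0), 0,
    0, 0, 0, by norm_num, by norm_num, U⁻¹, 1, 1,
    Matrix.isUnit_nonsing_inv_iff.mpr hUunit, isUnit_one, isUnit_one, ?_, ?_, ?_⟩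
  · have : (Matrix.reindex (finSumFinEquiv.trans (finCongr (rfl : 2 + 0 = 2)))
        (finSumFinEquiv.trans (finCongr (rfl : 2 + 0 = 2)))
        (Matrix.fromBlocks A 0 0 (0 : Matrix (Fin 0) (Fin 0) ℂ))) = A := by
      ext i j
      fin_cases i <;> fin_cases j <;>
        simp [Matrix.reindex_apply, Matrix.submatrix_apply, finCongr, finSumFinEquiv] <;> rfl
    rw [this]
    have h1 : (1 : Matrix (Fin 2) (Fin 2) ℂ)⁻¹ = 1 := by simp
    rw [h1, Matrix.one_mul, Matrix.mul_one]
  · have heq : (Matrix.reindex (finSumFinEquiv.trans (finCongr (rfl : 2 + 0 = 2)))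
        (finSumFinEquiv.trans (finCongr (rfl : 1 + 1 = 2)))
        (Matrix.fromBlocks (Matrix.of (fun i (_ : Fin 1) => (B * U) i 0)) 0 0
          (0 : Matrix (Fin 0) (Fin 1) ℂ))) = B * U := by
      ext i j
      fin_cases i <;> fin_cases j <;>
        simp [Matrix.reindex_apply, Matrix.submatrix_apply, finCongr, finSumFinEquiv] <;>
      first
        | rfl
        | (exact (hBU1 _).symm)
    rw [heq, Matrix.one_mul,
      Matrix.nonsing_inv_nonsing_inv U ((Matrix.isUnit_iff_isUnit_det U).mp hUunit)]
  · ext i j; exact i.elim0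

private lemma not_decomp_of_canonical {A B : Matrix (Fin 2) (Fin 2) ℂ} {l : ℂ}
    (h : SysEquiv A B (0 : Matrix (Fin 0) (Fin 2) ℂ) !![l, 1; 0, l]
      (1 : Matrix (Fin 2) (Fin 2) ℂ) 0) :
    ¬ Decomposable A B (0 : Matrix (Fin 0) (Fin 2) ℂ) := by
  obtain ⟨X, Y, Z, hX, hY, hZ, hA, hB1, -⟩ := h
  have hYd := (Matrix.isUnit_iff_isUnit_det Y).mp hY
  have hXd := (Matrix.isUnit_iff_isUnit_det X).mp hX
  have hYBX : Y * B = X := by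
    have h2 := congrArg (· * X) hB1
    simp only [Matrix.one_mul, Matrix.mul_assoc, Matrix.nonsing_inv_mul X hXd,
      Matrix.mul_one] at h2
    rw [← h2]
  have hBeq : B = Y⁻¹ * X := by
    rw [← hYBX, ← Matrix.mul_assoc, Matrix.nonsing_inv_mul Y hYd, Matrix.one_mul]
  have hBunit : IsUnit B := by
    rw [hBeq]; exact (Matrix.isUnit_nonsing_inv_iff.mpr hY).mul hX
  have hAeq : A = Y⁻¹ * !![l, 1; 0, l] * Y := by
    rw [hA, Matrix.mul_assoc, Matrix.mul_assoc, Matrix.mul_assoc,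
      Matrix.nonsing_inv_mul Y hYd, Matrix.mul_one, ← Matrix.mul_assoc,
      Matrix.nonsing_inv_mul Y hYd, Matrix.one_mul]
  rintro ⟨m₁, m₂, n₁, n₂, l₁, l₂, hm, hn, hl, A₁, B₁, C₁, A₂, B₂, C₂, hp1, hp2,
    X', Y', Z', hX', hY', hZ', hA', hB', -⟩
  have hMB : IsUnit ((Matrix.reindex (finSumFinEquiv.trans (finCongr hn))
      (finSumFinEquiv.trans (finCongr hm)) (Matrix.fromBlocks B₁ 0 0 B₂))) := by
    rw [hB']
    exact (hY'.mul hBunit).mul (Matrix.isUnit_nonsing_inv_iff.mpr hX')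
  have hMBd : ((Matrix.reindex (finSumFinEquiv.trans (finCongr hn))
      (finSumFinEquiv.trans (finCongr hm)) (Matrix.fromBlocks B₁ 0 0 B₂))).det ≠ 0 :=
    isUnit_iff_ne_zero.mp ((Matrix.isUnit_iff_isUnit_det _).mp hMB)
  have hl1 : l₁ = 0 := by omega
  have hl2 : l₂ = 0 := by omega
  subst hl1 hl2
  have hm2 : m₁ ≤ 2 := by omega
  have hn2 : n₁ ≤ 2 := by omega
  interval_cases m₁ <;> interval_cases n₁
  -- (m₁,n₁) = (0,0)
  · omega
  -- (0,1)
  · have hn2' : n₂ = 1 := by omega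
    have hm2' : m₂ = 2 := by omega
    subst hn2' hm2'
    exact hMBd (Matrix.det_eq_zero_of_row_eq_zero 0 (fun j => by
      fin_cases j <;>
        simp [Matrix.reindex_apply, Matrix.submatrix_apply, finCongr, finSumFinEquiv] <;> rfl))
  -- (0,2)
  · have hn2' : n₂ = 0 := by omega
    have hm2' : m₂ = 2 := by omega
    subst hn2' hm2'
    exact hMBd (Matrix.det_eq_zero_of_row_eq_zero 0 (fun j => by
      fin_cases j <;>
        simp [Matrix.reindex_apply, Matrix.submatrix_apply, finCongr, finSumFinEquiv] <;> rfl))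
  -- (1,0)
  · have hn2' : n₂ = 2 := by omega
    have hm2' : m₂ = 1 := by omega
    subst hn2' hm2'
    exact hMBd (Matrix.det_eq_zero_of_column_eq_zero 0 (fun i => by
      fin_cases i <;>
        simp [Matrix.reindex_apply, Matrix.submatrix_apply, finCongr, finSumFinEquiv] <;> rfl))
  -- (1,1): the real case
  · have hn2' : n₂ = 1 := by omega
    have hm2' : m₂ = 1 := by omega
    subst hn2' hm2'
    have hMA : (Matrix.reindex (finSumFinEquiv.trans (finCongr hn))
        (finSumFinEquiv.trans (finCongr hn)) (Matrix.fromBlocks A₁ 0 0 A₂))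
        = !![A₁ 0 0, 0; 0, A₂ 0 0] := by
      ext i j
      fin_cases i <;> fin_cases j <;>
        simp [Matrix.reindex_apply, Matrix.submatrix_apply, finCongr, finSumFinEquiv] <;> rfl
    set Q := Y' * Y⁻¹ with hQdef
    have hQ : IsUnit Q := hY'.mul (Matrix.isUnit_nonsing_inv_iff.mpr hY)
    have hQd := (Matrix.isUnit_iff_isUnit_det Q).mp hQ
    have hQinv : Q⁻¹ = Y * Y'⁻¹ := by
      rw [hQdef, Matrix.mul_inv_rev, Matrix.nonsing_inv_nonsing_inv Y hYd]
    have hMAeq : !![A₁ 0 0, 0; 0, A₂ 0 0] = Q * !![l, 1; 0, l] * Q⁻¹ := by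
      rw [← hMA, hA', hAeq, hQinv, hQdef]
      simp only [Matrix.mul_assoc]
    have hMQ : !![A₁ 0 0, 0; 0, A₂ 0 0] * Q = Q * !![l, 1; 0, l] := by
      rw [hMAeq, Matrix.mul_assoc, Matrix.nonsing_inv_mul Q hQd, Matrix.mul_one]
    -- trace equality
    have htr : A₁ 0 0 + A₂ 0 0 = l + l := by
      have t1 : (!![A₁ 0 0, 0; 0, A₂ 0 0] : Matrix (Fin 2) (Fin 2) ℂ).trace
          = (!![l, 1; 0, l] : Matrix (Fin 2) (Fin 2) ℂ).trace := by
        rw [hMAeq, Matrix.trace_mul_comm (Q * !![l, 1; 0, l]) Q⁻¹, ← Matrix.mul_assoc,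
          Matrix.nonsing_inv_mul Q hQd, Matrix.one_mul]
      simpa [Matrix.trace_fin_two_of] using t1
    -- det equality
    have hdt : A₁ 0 0 * A₂ 0 0 = l * l := by
      have hQd0 : Q.det ≠ 0 := isUnit_iff_ne_zero.mp hQd
      have t2 : (!![A₁ 0 0, 0; 0, A₂ 0 0] : Matrix (Fin 2) (Fin 2) ℂ).det * Q.det
          = Q.det * (!![l, 1; 0, l] : Matrix (Fin 2) (Fin 2) ℂ).det := by
        rw [← Matrix.det_mul, ← Matrix.det_mul, hMQ]
      have t3 : (!![A₁ 0 0, 0; 0, A₂ 0 0] : Matrix (Fin 2) (Fin 2) ℂ).det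
          = (!![l, 1; 0, l] : Matrix (Fin 2) (Fin 2) ℂ).det :=
        mul_right_cancel₀ hQd0 (by rw [t2, mul_comm])
      simpa [Matrix.det_fin_two_of] using t3
    have hd : A₂ 0 0 = l := by
      have hprod : (A₁ 0 0 - l) * (A₂ 0 0 - l) = 0 := by linear_combination hdt - l * htr
      have h2 : (A₂ 0 0 - l) * (A₂ 0 0 - l) = 0 := by
        linear_combination -hprod + (A₂ 0 0 - l) * htr
      exact sub_eq_zero.mp (mul_self_eq_zero.mp h2)
    have ha : A₁ 0 0 = l := by linear_combination htr - hd
    have hMA1 : !![A₁ 0 0, 0; 0, A₂ 0 0] = (l • 1 : Matrix (Fin 2) (Fin 2) ℂ) := by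
      rw [ha, hd]
      ext i j
      fin_cases i <;> fin_cases j <;> simp [Matrix.one_apply]
    have hJ : Q * !![l, 1; 0, l] = Q * (l • 1) := by
      rw [← hMQ, hMA1, Matrix.smul_mul, Matrix.mul_smul, Matrix.one_mul, Matrix.mul_one]
    have hJ2 : !![l, 1; 0, l] = (l • 1 : Matrix (Fin 2) (Fin 2) ℂ) := by
      have h3 := congrArg (Q⁻¹ * ·) hJ
      simpa only [← Matrix.mul_assoc, Matrix.nonsing_inv_mul Q hQd, Matrix.one_mul] using h3
    have h4 := congrFun (congrFun hJ2 0) 1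
    simp [Matrix.one_apply] at h4
  -- (1,2)
  · have hn2' : n₂ = 0 := by omega
    have hm2' : m₂ = 1 := by omega
    subst hn2' hm2'
    exact hMBd (Matrix.det_eq_zero_of_column_eq_zero 1 (fun i => by
      fin_cases i <;>
        simp [Matrix.reindex_apply, Matrix.submatrix_apply, finCongr, finSumFinEquiv] <;> rfl))
  -- (2,0)
  · have hn2' : n₂ = 2 := by omega
    have hm2' : m₂ = 0 := by omega
    subst hn2' hm2'
    exact hMBd (Matrix.det_eq_zero_of_column_eq_zero 0 (fun i => by
      fin_cases i <;>
        simp [Matrix.reindex_apply, Matrix.submatrix_apply, finCongr, finSumFinEquiv] <;> rfl))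
  -- (2,1)
  · have hn2' : n₂ = 1 := by omega
    have hm2' : m₂ = 0 := by omega
    subst hn2' hm2'
    exact hMBd (Matrix.det_eq_zero_of_row_eq_zero 1 (fun j => by
      fin_cases j <;>
        simp [Matrix.reindex_apply, Matrix.submatrix_apply, finCongr, finSumFinEquiv] <;> rfl))
  -- (2,2)
  · omega

private lemma smul_one_eq_diag (m : ℂ) :
    (m • 1 : Matrix (Fin 2) (Fin 2) ℂ) = !![m, 0; 0, m] := by
  ext i j
  fin_cases i <;> fin_cases j <;> simp [Matrix.one_apply]

private lemma main_dichotomy (A B : Matrix (Fin 2) (Fin 2) ℂ) :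
    (∃ l : ℂ, SysEquiv A B (0 : Matrix (Fin 0) (Fin 2) ℂ) !![l, 1; 0, l]
        (1 : Matrix (Fin 2) (Fin 2) ℂ) 0) ∨
      Decomposable A B (0 : Matrix (Fin 0) (Fin 2) ℂ) := by
  by_cases hB : IsUnit B
  · obtain ⟨s, hs⟩ : ∃ s : ℂ, s ^ 2 = (A 0 0 + A 1 1) ^ 2 - 4 * (A 0 0 * A 1 1 - A 0 1 * A 1 0) :=
      IsAlgClosed.exists_pow_nat_eq _ (by norm_num)
    set l := (A 0 0 + A 1 1 + s) / 2 with hldef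
    set m := (A 0 0 + A 1 1 - s) / 2 with hmdef
    have h1 : l + m = A 0 0 + A 1 1 := by rw [hldef, hmdef]; ring
    have h2 : l * m = A 0 0 * A 1 1 - A 0 1 * A 1 0 := by
      rw [hldef, hmdef]; linear_combination (-(1:ℂ)/4) * hs
    have hCH := ch_factored A l m h1 h2
    have hCH' := ch_factored A m l (by rw [add_comm]; exact h1) (by rw [mul_comm]; exact h2)
    by_cases hAm : A = m • 1
    · right
      refine decomp_diag hB isUnit_one (d₁ := m) (d₂ := m) ?_
      rw [hAm, smul_one_eq_diag, Matrix.mul_one, Matrix.one_mul]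
    · have hAm' : A - m • 1 ≠ 0 := sub_ne_zero.mpr hAm
      obtain ⟨v, hv'⟩ := exists_mulVec_ne_zero hAm'
      set v' := (A - m • 1) *ᵥ v with hv'def
      have hveq : A *ᵥ v = m • v + v' := by
        rw [hv'def, sub_mulVec, smul_mulVec, one_mulVec]
        abel
      have hlam : A *ᵥ v' = l • v' := by
        have h0 : (A - l • 1) *ᵥ v' = 0 := by
          rw [hv'def, mulVec_mulVec, hCH, Matrix.zero_mulVec]
        rw [sub_mulVec, smul_mulVec, one_mulVec, sub_eq_zero] at h0
        exact h0
      by_cases hlm : l = m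
      · left
        have hveq' : A *ᵥ v = l • v + v' := by rw [hveq, hlm]
        exact ⟨l, canonical_of hB (isUnit_colPair_jordan hv' hlam hveq')
          (mul_colPair_jordan hlam hveq')⟩
      · by_cases hAl : A = l • 1
        · right
          refine decomp_diag hB isUnit_one (d₁ := l) (d₂ := l) ?_
          rw [hAl, smul_one_eq_diag, Matrix.mul_one, Matrix.one_mul]
        · right
          have hAl' : A - l • 1 ≠ 0 := sub_ne_zero.mpr hAl
          obtain ⟨u, hw'⟩ := exists_mulVec_ne_zero hAl'
          set w := (A - l • 1) *ᵥ u with hwdef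
          have hmu : A *ᵥ w = m • w := by
            have h0 : (A - m • 1) *ᵥ w = 0 := by
              rw [hwdef, mulVec_mulVec, hCH', Matrix.zero_mulVec]
            rw [sub_mulVec, smul_mulVec, one_mulVec, sub_eq_zero] at h0
            exact h0
          exact decomp_diag hB (isUnit_colPair_diag hv' hw' hlm hlam hmu)
            (mul_colPair_diag hlam hmu)
  · right
    exact decomp_singular hB

/-- a size (2,2,0) system is indecomposable iff it is equivalent to
(J₂(λ), I₂) for some λ. -/
theorem size_2_2_0_indecomposable_iff_canonical
    (A B : Matrix (Fin 2) (Fin 2) ℂ) :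
    Indecomposable A B (0 : Matrix (Fin 0) (Fin 2) ℂ) ↔
      ∃ l : ℂ, SysEquiv A B (0 : Matrix (Fin 0) (Fin 2) ℂ) !![l, 1; 0, l] (1 : Matrix (Fin 2) (Fin 2) ℂ) 0 := by
  constructor
  · intro h
    rcases main_dichotomy A B with h' | h'
    · exact h'
    · exact absurd h' h
  · rintro ⟨l, hl⟩
    exact not_decomp_of_canonical hl
end

section
/- A linear dynamical system (A,C) of size (0,2,2) (A a 2×2 complex matrix, B the empty 2×0 matrix, C a 2×2 complex matrix) is indecomposable if and only if it is equivalent to the canonical form (J₂(λ), C = I₂) for some λ ∈ ℂ, where I₂ is the 2×2 identity matrix. -/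
/-!
If `C` is singular, an invertible change of outputs makes one row of `C` vanish, and that output
splits off as a summand of size `(0, 0, 1)`. If `C` is invertible, the output change `Z = Y C⁻¹`
normalises `C` to `I₂` while `A` may still be conjugated by any `Y`; a `2 × 2` complex matrix is
conjugate either to a Jordan block `J₂(λ)` or to a diagonal matrix, and in the diagonal case the
system splits into two systems of size `(0, 1, 1)`. Conversely, in a splitting of `(J₂(λ), I₂)`
the block-diagonal output matrix is invertible, so a rank count forces both summands to be
square, hence of size `(0, 1, 1)`; this would make `J₂(λ)` conjugate to a diagonal matrix.
-/

open Matrix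

namespace Matrix

variable {K : Type*} [Field K] {m n l₁ l₂ n₁ n₂ : Type*} [Fintype n] [Fintype n₁] [Fintype n₂]

theorem rank_add_le (M N : Matrix m n K) : (M + N).rank ≤ M.rank + N.rank := by
  rw [rank, rank, rank, mulVecLin_add]
  exact (Submodule.finrank_mono (LinearMap.range_add_le _ _)).trans
    (Submodule.finrank_add_le_finrank_add_finrank _ _)

variable [Fintype l₁] [Fintype l₂] [DecidableEq l₁] [DecidableEq l₂] [DecidableEq n₁]
  [DecidableEq n₂]

theorem rank_fromBlocks_zero_zero_le (C₁ : Matrix l₁ n₁ K) (C₂ : Matrix l₂ n₂ K) :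
    (fromBlocks C₁ 0 0 C₂).rank ≤ C₁.rank + C₂.rank := by
  have h₁ : fromBlocks C₁ 0 0 (0 : Matrix l₂ n₂ K) =
      fromRows (1 : Matrix l₁ l₁ K) 0 * C₁ * fromCols (1 : Matrix n₁ n₁ K) 0 := by
    rw [fromRows_mul, fromRows_mul_fromCols]; simp
  have h₂ : fromBlocks (0 : Matrix l₁ n₁ K) 0 0 C₂ =
      fromRows (0 : Matrix l₁ l₂ K) 1 * C₂ * fromCols 0 (1 : Matrix n₂ n₂ K) := by
    rw [fromRows_mul, fromRows_mul_fromCols]; simp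
  calc (fromBlocks C₁ 0 0 C₂).rank
      = (fromBlocks C₁ 0 0 0 + fromBlocks 0 0 0 C₂).rank := by rw [fromBlocks_add]; simp
    _ ≤ C₁.rank + C₂.rank := by
      rw [h₁, h₂]
      exact (rank_add_le _ _).trans <| add_le_add
        ((rank_mul_le_left _ _).trans (rank_mul_le_right _ _))
        ((rank_mul_le_left _ _).trans (rank_mul_le_right _ _))

theorem card_eq_of_isUnit_reindex_fromBlocks {ι : Type*} [Fintype ι] [DecidableEq ι]
    (e₁ : l₁ ⊕ l₂ ≃ ι) (e₂ : n₁ ⊕ n₂ ≃ ι) (C₁ : Matrix l₁ n₁ K) (C₂ : Matrix l₂ n₂ K)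
    (h : IsUnit (reindex e₁ e₂ (fromBlocks C₁ 0 0 C₂))) :
    Fintype.card l₁ = Fintype.card n₁ := by
  have hrank := rank_of_isUnit _ h
  rw [rank_reindex] at hrank
  have hl := Fintype.card_congr e₁
  have hn := Fintype.card_congr e₂
  rw [Fintype.card_sum] at hl hn
  have := rank_fromBlocks_zero_zero_le C₁ C₂
  have := C₁.rank_le_card_width
  have := C₁.rank_le_card_height
  have := C₂.rank_le_card_width
  have := C₂.rank_le_card_height
  omega

theorem isConj_iff {R : Type*} [CommRing R] [DecidableEq n] {A B : Matrix n n R} :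
    IsConj A B ↔ ∃ P : Matrix n n R, IsUnit P ∧ P * A * P⁻¹ = B := by
  constructor
  · rintro ⟨P, hP⟩
    exact ⟨P, P.isUnit, by rw [hP.eq, Matrix.mul_assoc, ← coe_units_inv, Units.mul_inv, mul_one]⟩
  · rintro ⟨_, ⟨P, rfl⟩, rfl⟩
    exact ⟨P, by simp [SemiconjBy, ← coe_units_inv, Matrix.mul_assoc]⟩

end Matrix

section TwoByTwo

variable {K : Type*} [Field K]

theorem exists_isUnit_mul_row_one_eq_zero (C : Matrix (Fin 2) (Fin 2) K) (hC : C.det = 0) :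
    ∃ Z : Matrix (Fin 2) (Fin 2) K, IsUnit Z ∧ (Z * C) 1 = 0 := by
  obtain ⟨u, hu0, hu⟩ := exists_vecMul_eq_zero_iff.mpr hC
  have hrow (x y : K) : (!![x, y; u 0, u 1] * C) 1 = 0 := by
    rw [← hu]; ext j; simp [vecMul, dotProduct, mul_apply, Fin.sum_univ_two]
  by_cases h1 : u 1 = 0
  · have h0 : u 0 ≠ 0 := fun h0 => hu0 (by ext i; fin_cases i <;> simp [h0, h1])
    exact ⟨!![0, 1; u 0, u 1], by simp [isUnit_iff_isUnit_det, det_fin_two_of, h0], hrow 0 1⟩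
  · exact ⟨!![1, 0; u 0, u 1], by simp [isUnit_iff_isUnit_det, det_fin_two_of, h1], hrow 1 0⟩

theorem exists_isConj_upperTriangular [IsAlgClosed K] (A : Matrix (Fin 2) (Fin 2) K) :
    ∃ a b d : K, IsConj A !![a, b; 0, d] := by
  by_cases hc : A 1 0 = 0
  · exact ⟨A 0 0, A 0 1, A 1 1, by rw [← hc, ← eta_fin_two A]⟩
  obtain ⟨t, ht⟩ := IsAlgClosed.exists_root A.charpoly (by simp [charpoly_degree_eq_dim])
  replace ht : t ^ 2 - (A 0 0 + A 1 1) * t + (A 0 0 * A 1 1 - A 0 1 * A 1 0) = 0 := by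
    simpa [charpoly_fin_two, trace_fin_two, det_fin_two] using ht
  -- `(t - A 1 1, A 1 0)` is an eigenvector for the eigenvalue `t`; complete it by `(1, 0)`.
  have hQ : IsUnit !![t - A 1 1, 1; A 1 0, 0] := by
    simp [isUnit_iff_isUnit_det, det_fin_two_of, hc]
  refine ⟨t, 1, A 0 0 + A 1 1 - t, IsConj.symm ⟨hQ.unit, ?_⟩⟩
  rw [IsUnit.unit_spec, SemiconjBy, eta_fin_two A]
  ext i j
  fin_cases i <;> fin_cases j <;> simp <;> grind

theorem upperTriangular_isConj_jordan_or_diagonal (a b d : K) :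
    (∃ l, IsConj !![a, b; 0, d] !![l, 1; 0, l]) ∨
      ∃ p q, IsConj !![a, b; 0, d] !![p, 0; 0, q] := by
  by_cases had : a = d
  · subst had
    by_cases hb : b = 0
    · exact Or.inr ⟨a, a, by rw [hb]⟩
    have hS : IsUnit !![1, 0; 0, b] := by simp [isUnit_iff_isUnit_det, det_fin_two_of, hb]
    refine Or.inl ⟨a, hS.unit, ?_⟩
    rw [IsUnit.unit_spec, SemiconjBy]
    ext i j
    fin_cases i <;> fin_cases j <;> simp [mul_comm]
  · have hS : IsUnit !![1, b / (a - d); 0, 1] := by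
      simp [isUnit_iff_isUnit_det, det_fin_two_of]
    have hb : b + b / (a - d) * d = a * (b / (a - d)) := by
      field_simp [sub_ne_zero.mpr had]
      ring
    refine Or.inr ⟨a, d, hS.unit, ?_⟩
    rw [IsUnit.unit_spec, SemiconjBy]
    ext i j
    fin_cases i <;> fin_cases j <;> simp [hb]

theorem isConj_jordan_or_diagonal [IsAlgClosed K] (A : Matrix (Fin 2) (Fin 2) K) :
    (∃ l, IsConj A !![l, 1; 0, l]) ∨ ∃ p q, IsConj A !![p, 0; 0, q] := by
  obtain ⟨a, b, d, hT⟩ := exists_isConj_upperTriangular A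
  rcases upperTriangular_isConj_jordan_or_diagonal a b d with ⟨l, hJ⟩ | ⟨p, q, hD⟩
  · exact Or.inl ⟨l, hT.trans hJ⟩
  · exact Or.inr ⟨p, q, hT.trans hD⟩

theorem not_isConj_jordan_diagonal (l a d : K) : ¬ IsConj !![l, 1; 0, l] !![a, 0; 0, d] := by
  rintro ⟨c, hc⟩
  have hdet := (isUnit_iff_isUnit_det _).mp c.isUnit
  set P : Matrix (Fin 2) (Fin 2) K := ↑c
  have e : P * !![l, 1; 0, l] = !![a, 0; 0, d] * P := hc
  have e00 : P 0 0 * l = a * P 0 0 := by simpa [mul_apply] using congrFun₂ e 0 0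
  have e01 : P 0 0 + P 0 1 * l = a * P 0 1 := by simpa [mul_apply] using congrFun₂ e 0 1
  have e10 : P 1 0 * l = d * P 1 0 := by simpa [mul_apply] using congrFun₂ e 1 0
  have e11 : P 1 0 + P 1 1 * l = d * P 1 1 := by simpa [mul_apply] using congrFun₂ e 1 1
  -- Row `i` of `e` says `P i 0 = (dᵢ - l) * P i 1` and `(dᵢ - l) * P i 0 = 0`.
  have h0 : P 0 0 ^ 2 = 0 := by linear_combination P 0 0 * e01 - P 0 1 * e00
  have h1 : P 1 0 ^ 2 = 0 := by linear_combination P 1 0 * e11 - P 1 1 * e10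
  rw [det_fin_two, pow_eq_zero_iff two_ne_zero |>.mp h0, pow_eq_zero_iff two_ne_zero |>.mp h1]
    at hdet
  simp at hdet

end TwoByTwo

namespace SysEquiv

variable {m n l : ℕ} {A A' A'' : Matrix (Fin n) (Fin n) ℂ} {B B' B'' : Matrix (Fin n) (Fin m) ℂ}
  {C C' C'' : Matrix (Fin l) (Fin n) ℂ}

theorem symm (h : SysEquiv A B C A' B' C') : SysEquiv A' B' C' A B C := by
  obtain ⟨X, Y, Z, ⟨X, rfl⟩, ⟨Y, rfl⟩, ⟨Z, rfl⟩, rfl, rfl, rfl⟩ := h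
  refine ⟨↑X⁻¹, ↑Y⁻¹, ↑Z⁻¹, Units.isUnit _, Units.isUnit _, Units.isUnit _, ?_, ?_, ?_⟩ <;>
  simp [← coe_units_inv, Matrix.mul_assoc, ← Matrix.mul_assoc (↑Y⁻¹ : Matrix (Fin n) (Fin n) ℂ),
    ← Matrix.mul_assoc (↑Z⁻¹ : Matrix (Fin l) (Fin l) ℂ)]

theorem trans (h : SysEquiv A B C A' B' C') (h' : SysEquiv A' B' C' A'' B'' C'') :
    SysEquiv A B C A'' B'' C'' := by
  obtain ⟨X, Y, Z, hX, hY, hZ, rfl, rfl, rfl⟩ := h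
  obtain ⟨X', Y', Z', hX', hY', hZ', rfl, rfl, rfl⟩ := h'
  refine ⟨X' * X, Y' * Y, Z' * Z, hX'.mul hX, hY'.mul hY, hZ'.mul hZ, ?_, ?_, ?_⟩ <;>
  simp [Matrix.mul_inv_rev, Matrix.mul_assoc]

end SysEquiv

theorem Decomposable.of_sysEquiv {m n l : ℕ} {A A' : Matrix (Fin n) (Fin n) ℂ}
    {B B' : Matrix (Fin n) (Fin m) ℂ} {C C' : Matrix (Fin l) (Fin n) ℂ}
    (hd : Decomposable A' B' C') (h : SysEquiv A B C A' B' C') : Decomposable A B C := by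
  obtain ⟨m₁, m₂, n₁, n₂, l₁, l₂, hm, hn, hl, A₁, B₁, C₁, A₂, B₂, C₂, h₁, h₂, h'⟩ := hd
  exact ⟨m₁, m₂, n₁, n₂, l₁, l₂, hm, hn, hl, A₁, B₁, C₁, A₂, B₂, C₂, h₁, h₂, h.trans h'⟩

theorem sysEquiv_one_of_isConj {m n : ℕ} {A A' C : Matrix (Fin n) (Fin n) ℂ} (hC : IsUnit C)
    (h : IsConj A A') : SysEquiv A (0 : Matrix (Fin n) (Fin m) ℂ) C A' 0 1 := by
  obtain ⟨P, hP, rfl⟩ := isConj_iff.mp h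
  refine ⟨1, P, P * C⁻¹, isUnit_one, hP, hP.mul (isUnit_nonsing_inv_iff.mpr hC), rfl, by simp, ?_⟩
  rw [isUnit_iff_isUnit_det] at hP hC
  simp [Matrix.mul_assoc, nonsing_inv_mul_cancel_left _ _ hC, mul_nonsing_inv _ hP]

theorem decomposable_of_row_last_eq_zero {m n l : ℕ} (A : Matrix (Fin n) (Fin n) ℂ)
    (B : Matrix (Fin n) (Fin m) ℂ) (C : Matrix (Fin (l + 1)) (Fin n) ℂ)
    (hC : C (Fin.last l) = 0) (h : 0 < m + n + l) : Decomposable A B C := by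
  have inl_symm {k : ℕ} (i : Fin k) : (finSumFinEquiv.symm i : Fin k ⊕ Fin 0) = Sum.inl i :=
    finSumFinEquiv_symm_apply_castAdd i
  refine ⟨m, 0, n, 0, l, 1, rfl, rfl, rfl, A, B, C.submatrix Fin.castSucc id, 0, 0, 0,
    h, Nat.one_pos, 1, 1, 1, isUnit_one, isUnit_one, isUnit_one, ?_, ?_, ?_⟩
  · ext i j
    simp [reindex_apply, inl_symm]
  · ext i j
    simp [reindex_apply, inl_symm]
  · ext i j
    induction i using Fin.lastCases <;> simp [reindex_apply, hC, inl_symm]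

theorem decomposable_of_det_eq_zero {m : ℕ} (A : Matrix (Fin 2) (Fin 2) ℂ)
    (B : Matrix (Fin 2) (Fin m) ℂ) (C : Matrix (Fin 2) (Fin 2) ℂ) (hC : C.det = 0) :
    Decomposable A B C := by
  obtain ⟨Z, hZ, hZC⟩ := exists_isUnit_mul_row_one_eq_zero C hC
  exact (decomposable_of_row_last_eq_zero A B (Z * C) hZC (by omega)).of_sysEquiv
    ⟨1, 1, Z, isUnit_one, isUnit_one, hZ, by simp, by simp, by simp⟩

theorem decomposable_diagonal (p q : ℂ) :
    Decomposable !![p, 0; 0, q] (0 : Matrix (Fin 2) (Fin 0) ℂ)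
      (1 : Matrix (Fin 2) (Fin 2) ℂ) := by
  refine ⟨0, 0, 1, 1, 1, 1, rfl, rfl, rfl, !![p], 0, 1, !![q], 0, 1, by norm_num, by norm_num,
    1, 1, 1, isUnit_one, isUnit_one, isUnit_one, ?_, ?_, ?_⟩ <;>
  simp only [inv_one, Matrix.mul_one, Matrix.one_mul] <;>
  ext i j <;> fin_cases i <;> fin_cases j <;> rfl

theorem indecomposable_jordan (l : ℂ) :
    Indecomposable !![l, 1; 0, l] (0 : Matrix (Fin 2) (Fin 0) ℂ)
      (1 : Matrix (Fin 2) (Fin 2) ℂ) := by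
  rintro ⟨m₁, m₂, n₁, n₂, l₁, l₂, hm, hn, hl, A₁, B₁, C₁, A₂, B₂, C₂, h₁, h₂,
    X, Y, Z, -, hY, hZ, hA, -, hC⟩
  have hsquare : l₁ = n₁ := by
    have hCunit : IsUnit (Z * 1 * Y⁻¹) := by
      simpa using hZ.mul (isUnit_nonsing_inv_iff.mpr hY)
    simpa using card_eq_of_isUnit_reindex_fromBlocks _ _ C₁ C₂ (hC ▸ hCunit)
  obtain rfl : n₁ = 1 := by omega
  obtain rfl : n₂ = 1 := by omega
  refine not_isConj_jordan_diagonal l (A₁ 0 0) (A₂ 0 0) (isConj_iff.mpr ⟨Y, hY, ?_⟩)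
  rw [← hA]
  ext i j
  fin_cases i <;> fin_cases j <;> rfl

/-- a size (0,2,2) system is indecomposable iff it is equivalent to
(J₂(λ), C = I₂) for some λ. -/
theorem size_0_2_2_indecomposable_iff_canonical
    (A : Matrix (Fin 2) (Fin 2) ℂ) (C : Matrix (Fin 2) (Fin 2) ℂ) :
    Indecomposable A (0 : Matrix (Fin 2) (Fin 0) ℂ) C ↔
      ∃ l : ℂ, SysEquiv A (0 : Matrix (Fin 2) (Fin 0) ℂ) C
        !![l, 1; 0, l] 0 (1 : Matrix (Fin 2) (Fin 2) ℂ) := by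
  constructor
  · intro hA
    have hC : IsUnit C := by
      by_contra hC
      exact hA (decomposable_of_det_eq_zero A 0 C (by simpa [isUnit_iff_isUnit_det] using hC))
    rcases isConj_jordan_or_diagonal A with ⟨l, hJ⟩ | ⟨p, q, hD⟩
    · exact ⟨l, sysEquiv_one_of_isConj hC hJ⟩
    · exact (hA ((decomposable_diagonal p q).of_sysEquiv (sysEquiv_one_of_isConj hC hD))).elim
  · rintro ⟨l, h⟩ hA
    exact indecomposable_jordan l (hA.of_sysEquiv h.symm)
end
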